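/- Let f : ℝ^p → ℝ be concave and four times continuously differentiable, θ, θ̃, β ∈ ℝ^p, F = −∇²f(θ) positive definite, r = ‖F^{-1/2}β‖₂. Suppose f satisfies the third-order smoothness bound with parameters (τ₃, F, 4r) at θ, that τ₃r ≤ 1/16, ∇f(θ) = 0, and ∇f(θ̃) + β = 0. Then ‖F^{1/2}(θ̃ − θ)‖₂ ≤ 4r. -/

import Mathlib

/-!
Along the segment from `θ` to `θ̃`, with `u = θ̃ - θ`, the directional derivative
`g t = ∇f(θ + t u)[u]` is antitone by concavity, vanishes at `0`, has slope `-‖u‖_F²` at `0`,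
and equals `-βᵀu ≥ -r‖u‖_F` at `1` by Cauchy–Schwarz in the `F⁻¹`-geometry.
If `‖u‖_F > 4r`, take `s = 4r/‖u‖_F < 1`: the third-order bound holds on `[0, s]`, so a
second-order Taylor estimate gives `g s ≤ -4r‖u‖_F + 16τ₃r²‖u‖_F ≤ -3r‖u‖_F`, contradicting
`g 1 ≥ -r‖u‖_F` when `r > 0`. When `r = 0`, `g` would be constant on `[0, 1]` although `g' 0 < 0`.
-/

open Matrix

/-- The Hessian matrix of `f : ℝ^p → ℝ` at `x`. -/
noncomputable def hessMat {p : ℕ} (f : (Fin p → ℝ) → ℝ) (x : Fin p → ℝ) :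
    Matrix (Fin p) (Fin p) ℝ :=
  Matrix.of fun i j => iteratedFDeriv ℝ 2 f x ![Pi.single i 1, Pi.single j 1]

/-- The trilinear action `⟨∇³f(x), z ⊗ z ⊗ z⟩` of the third derivative of `f` at `x`. -/
noncomputable def d3 {p : ℕ} (f : (Fin p → ℝ) → ℝ) (x z : Fin p → ℝ) : ℝ :=
  iteratedFDeriv ℝ 3 f x ![z, z, z]

lemma Matrix.PosSemidef.dotProduct_mulVec_sq_le {n : Type*} [Fintype n]
    {M : Matrix n n ℝ} (hM : M.PosSemidef) (x y : n → ℝ) :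
    (x ⬝ᵥ M *ᵥ y) ^ 2 ≤ (x ⬝ᵥ M *ᵥ x) * (y ⬝ᵥ M *ᵥ y) := by
  let := M.toSeminormedAddCommGroup hM
  let := M.toInnerProductSpace hM
  have h := real_inner_mul_inner_self_le x y
  change ((M *ᵥ y) ⬝ᵥ x) * ((M *ᵥ y) ⬝ᵥ x) ≤ ((M *ᵥ x) ⬝ᵥ x) * ((M *ᵥ y) ⬝ᵥ y) at h
  simpa only [dotProduct_comm (M *ᵥ _), sq] using h

lemma Matrix.PosDef.dotProduct_le_sqrt_mul_sqrt {n : Type*} [Fintype n] [DecidableEq n]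
    {F : Matrix n n ℝ} (hF : F.PosDef) (β u : n → ℝ) :
    β ⬝ᵥ u ≤ √(β ⬝ᵥ F⁻¹ *ᵥ β) * √(u ⬝ᵥ F *ᵥ u) := by
  have hu : F⁻¹ *ᵥ (F *ᵥ u) = u := by
    rw [mulVec_mulVec, nonsing_inv_mul F (isUnit_iff_ne_zero.mpr hF.det_pos.ne'), one_mulVec]
  have h := hF.inv.posSemidef.dotProduct_mulVec_sq_le β (F *ᵥ u)
  rw [hu, dotProduct_comm (F *ᵥ u)] at h
  rw [← Real.sqrt_mul' _ (by simpa using hF.posSemidef.dotProduct_mulVec_nonneg u)]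
  exact (le_abs_self _).trans (Real.abs_le_sqrt h)

lemma sqrt_smul_dotProduct_mulVec_smul {n : Type*} [Fintype n] (M : Matrix n n ℝ) (u : n → ℝ)
    {t : ℝ} (ht : 0 ≤ t) :
    √((t • u) ⬝ᵥ M *ᵥ (t • u)) = t * √(u ⬝ᵥ M *ᵥ u) := by
  rw [mulVec_smul, smul_dotProduct, dotProduct_smul, smul_eq_mul, smul_eq_mul, ← mul_assoc,
    Real.sqrt_mul (mul_self_nonneg t), Real.sqrt_mul_self ht]

lemma dotProduct_hessMat_mulVec {p : ℕ} (f : (Fin p → ℝ) → ℝ) (x u : Fin p → ℝ) :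
    u ⬝ᵥ hessMat f x *ᵥ u = iteratedFDeriv ℝ 2 f x fun _ => u := by
  set B := (ContinuousLinearMap.coeLM ℝ).comp (fderiv ℝ (fderiv ℝ f) x).toLinearMap
  have hB : hessMat f x = LinearMap.toMatrix₂' ℝ B := by
    ext i j
    simp [hessMat, B, iteratedFDeriv_two_apply]
  rw [hB, ← Matrix.toLinearMap₂'_apply', Matrix.toLinearMap₂'_toMatrix', iteratedFDeriv_two_apply]
  rfl

lemma d3_eq_iteratedFDeriv {p : ℕ} (f : (Fin p → ℝ) → ℝ) (x u : Fin p → ℝ) :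
    d3 f x u = iteratedFDeriv ℝ 3 f x fun _ => u := by
  unfold d3
  congr
  funext i
  fin_cases i <;> rfl

section LineDerivatives

variable {E G : Type*} [NormedAddCommGroup E] [NormedSpace ℝ E] [NormedAddCommGroup G]
  [NormedSpace ℝ G]

noncomputable def lineIteratedDeriv (f : E → G) (x u : E) (n : ℕ) (t : ℝ) : G :=
  iteratedFDeriv ℝ n f (x + t • u) fun _ => u

variable {f : E → G} {x u : E}

lemma lineIteratedDeriv_zero (t : ℝ) : lineIteratedDeriv f x u 0 t = f (x + t • u) :=
  iteratedFDeriv_zero_apply _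

lemma lineIteratedDeriv_one (t : ℝ) :
    lineIteratedDeriv f x u 1 t = fderiv ℝ f (x + t • u) u :=
  iteratedFDeriv_one_apply _

lemma hasDerivAt_lineIteratedDeriv {n : ℕ} (hf : ContDiff ℝ (n + 1) f) (t : ℝ) :
    HasDerivAt (lineIteratedDeriv f x u n) (lineIteratedDeriv f x u (n + 1) t) t := by
  have hline : HasDerivAt (fun t : ℝ => x + t • u) u t := by
    simpa using ((hasDerivAt_id t).smul_const u).const_add x
  have hdiff : DifferentiableAt ℝ (iteratedFDeriv ℝ n f) (x + t • u) :=
    (hf.differentiable_iteratedFDeriv (by exact_mod_cast n.lt_succ_self)).differentiableAt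
  exact (ContinuousMultilinearMap.apply ℝ (fun _ : Fin n => E) G fun _ => u).hasFDerivAt
    |>.comp_hasDerivAt t (hdiff.hasFDerivAt.comp_hasDerivAt t hline)

end LineDerivatives

lemma ConcaveOn.antitone_lineIteratedDeriv_one {E : Type*} [NormedAddCommGroup E]
    [NormedSpace ℝ E] {f : E → ℝ} (hconc : ConcaveOn ℝ Set.univ f) (hf : ContDiff ℝ 1 f)
    (x u : E) : Antitone (lineIteratedDeriv f x u 1) := by
  have hφ : ConcaveOn ℝ Set.univ (lineIteratedDeriv f x u 0) := by
    have hline : lineIteratedDeriv f x u 0 = f ∘ AffineMap.lineMap x (x + u) := by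
      funext t
      simp [lineIteratedDeriv_zero, AffineMap.lineMap_apply_module', add_comm]
    simpa [hline] using hconc.comp_affineMap (AffineMap.lineMap x (x + u))
  have hderiv (t : ℝ) := hasDerivAt_lineIteratedDeriv (n := 0) hf t (x := x) (u := u)
  intro s t hst
  simpa only [(hderiv _).deriv] using
    hφ.antitoneOn_deriv (fun t _ => (hderiv t).differentiableAt) trivial trivial hst

lemma Antitone.lt_of_hasDerivAt_neg {g : ℝ → ℝ} {g' a b : ℝ} (hg : Antitone g)
    (hd : HasDerivAt g g' a) (hneg : g' < 0) (hab : a < b) : g b < g a := by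
  by_contra! hle
  have hconst : Set.EqOn g (fun _ => g a) (Set.Icc a b) := fun t ht =>
    le_antisymm (hg ht.1) (hle.trans (hg ht.2))
  have hzero : HasDerivWithinAt g 0 (Set.Icc a b) a :=
    (hasDerivWithinAt_const a _ (g a)).congr hconst (hconst ⟨le_rfl, hab.le⟩)
  have := (uniqueDiffOn_Icc hab a ⟨le_rfl, hab.le⟩).eq_deriv _ hd.hasDerivWithinAt hzero
  linarith

lemma image_le_add_mul_add_sq_of_abs_deriv2_le {g g' g'' : ℝ → ℝ} {M s : ℝ} (hs : 0 ≤ s)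
    (hg : ∀ t, HasDerivAt g (g' t) t) (hg' : ∀ t, HasDerivAt g' (g'' t) t)
    (hM : ∀ t ∈ Set.Icc 0 s, |g'' t| ≤ M) :
    g s ≤ g 0 + g' 0 * s + M * s ^ 2 := by
  have hM0 : 0 ≤ M := (abs_nonneg _).trans (hM 0 ⟨le_rfl, hs⟩)
  have hg'_sub : ∀ t ∈ Set.Icc 0 s, ‖g' t - g' 0‖ ≤ M * (t - 0) :=
    norm_image_sub_le_of_norm_deriv_le_segment' (fun t _ => (hg' t).hasDerivWithinAt)
      (fun t ht => hM t (Set.Ico_subset_Icc_self ht))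
  have hψ : ∀ t, HasDerivAt (fun t => g t - g' 0 * t) (g' t - g' 0) t := fun t =>
    (hg t).sub (by simpa using (hasDerivAt_id t).const_mul (g' 0))
  have := norm_image_sub_le_of_norm_deriv_le_segment' (C := M * s)
    (fun t _ => (hψ t).hasDerivWithinAt) (fun t ht => (hg'_sub t (Set.Ico_subset_Icc_self ht)).trans
      (by gcongr; linarith [ht.2])) s ⟨hs, le_rfl⟩
  rw [Real.norm_eq_abs] at this
  nlinarith [le_abs_self (g s - g' 0 * s - (g 0 - g' 0 * 0))]

lemma Antitone.apply_one_lt_of_abs_deriv2_le {g g' g'' : ℝ → ℝ} {N r τ : ℝ} (hanti : Antitone g)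
    (hg : ∀ t, HasDerivAt g (g' t) t) (hg' : ∀ t, HasDerivAt g' (g'' t) t)
    (hg0 : g 0 = 0) (hg'0 : g' 0 = -N ^ 2) (hr : 0 ≤ r) (hrN : 4 * r < N)
    (hτr : τ * r ≤ 1 / 16) (hg'' : ∀ t ∈ Set.Icc 0 (4 * r / N), |g'' t| ≤ τ * N ^ 3) :
    g 1 < -(r * N) := by
  have hN : 0 < N := by linarith
  rcases hr.eq_or_lt with rfl | hr
  · rw [zero_mul, neg_zero, ← hg0]
    exact hanti.lt_of_hasDerivAt_neg (hg 0) (by rw [hg'0]; nlinarith) one_pos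
  set s := 4 * r / N
  have hsN : s * N = 4 * r := div_mul_cancel₀ _ hN.ne'
  calc g 1 ≤ g s := hanti ((div_lt_one hN).2 hrN).le
    _ ≤ g 0 + g' 0 * s + τ * N ^ 3 * s ^ 2 :=
      image_le_add_mul_add_sq_of_abs_deriv2_le (by positivity) hg hg' hg''
    _ = -(4 * r * N) + 16 * (τ * r) * r * N := by
      rw [hg0, hg'0]
      linear_combination (-N + τ * N * (s * N + 4 * r)) * hsN
    _ < -(r * N) := by nlinarith [mul_pos hr hN]

/-- Localization of the perturbed maximizer: if `f` is concave and `C⁴`,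
`F = -∇²f(θ)` is positive definite, `r = ‖F^{-1/2}β‖₂`, `f` satisfies the third-order
smoothness with parameters `(τ₃, F, 4r)` at `θ`, `τ₃ r ≤ 1/16`, `∇f(θ) = 0` and
`∇f(θ̃) + β = 0`, then `‖F^{1/2}(θ̃ - θ)‖₂ ≤ 4r`. -/
theorem perturbed_maximizer_localization {p : ℕ} (f : (Fin p → ℝ) → ℝ)
    (hconc : ConcaveOn ℝ Set.univ f) (hf : ContDiff ℝ 4 f)
    (θ θt β : Fin p → ℝ) (F : Matrix (Fin p) (Fin p) ℝ)
    (hFhess : F = -hessMat f θ) (hFpd : F.PosDef) (τ₃ : ℝ)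
    (r : ℝ) (hrdef : r = Real.sqrt (β ⬝ᵥ F⁻¹.mulVec β))
    (hsmooth : ∀ u z : Fin p → ℝ, Real.sqrt (u ⬝ᵥ F.mulVec u) ≤ 4 * r →
      |d3 f (θ + u) z| ≤ τ₃ * Real.sqrt (z ⬝ᵥ F.mulVec z) ^ 3)
    (hτr : τ₃ * r ≤ 1 / 16)
    (hgrad : fderiv ℝ f θ = 0)
    (hgradt : ∀ v : Fin p → ℝ, fderiv ℝ f θt v + β ⬝ᵥ v = 0) :
    Real.sqrt ((θt - θ) ⬝ᵥ F.mulVec (θt - θ)) ≤ 4 * r := by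
  by_contra! hfar
  set u := θt - θ with hu
  set N := √(u ⬝ᵥ F *ᵥ u)
  set g := lineIteratedDeriv f θ u
  have hr0 : 0 ≤ r := hrdef ▸ Real.sqrt_nonneg _
  have hg (n : ℕ) (hn : n ≤ 3) (t : ℝ) : HasDerivAt (g n) (g (n + 1) t) t :=
    hasDerivAt_lineIteratedDeriv (hf.of_le (by exact_mod_cast (show n + 1 ≤ 4 by omega))) t
  have hg1_zero : g 1 0 = 0 := by simp [g, lineIteratedDeriv_one, hgrad]
  have hg1_one : g 1 1 = -(β ⬝ᵥ u) := by
    have hθt : θ + (1 : ℝ) • u = θt := by rw [one_smul, hu, add_sub_cancel]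
    simp only [g, lineIteratedDeriv_one, hθt]
    linarith [hgradt u]
  have hg2_zero : g 2 0 = -N ^ 2 := by
    rw [Real.sq_sqrt (by simpa using hFpd.posSemidef.dotProduct_mulVec_nonneg u), hFhess,
      neg_mulVec, dotProduct_neg, neg_neg, dotProduct_hessMat_mulVec]
    simp [g, lineIteratedDeriv]
  have hg3 (t : ℝ) (ht : t ∈ Set.Icc 0 (4 * r / N)) : |g 3 t| ≤ τ₃ * N ^ 3 := by
    rw [show g 3 t = d3 f (θ + t • u) u from (d3_eq_iteratedFDeriv _ _ _).symm]
    refine hsmooth _ _ ?_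
    rw [sqrt_smul_dotProduct_mulVec_smul _ _ ht.1]
    exact (le_div_iff₀ (by linarith)).1 ht.2
  have hβu : β ⬝ᵥ u ≤ r * N := hrdef ▸ hFpd.dotProduct_le_sqrt_mul_sqrt β u
  have hanti : Antitone (g 1) :=
    hconc.antitone_lineIteratedDeriv_one (hf.of_le (by norm_num)) θ u
  have hg1_lt := hanti.apply_one_lt_of_abs_deriv2_le (hg 1 (by norm_num)) (hg 2 (by norm_num))
    hg1_zero hg2_zero hr0 hfar hτr hg3
  linarith
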